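/- (Second gradient torsion energy) Let μ_macro, λ_macro, μ, L_c, a₁, a₂, a₃ ∈ ℝ, ϑ ∈ ℝ, R > 0, and let u(x) = ϑ·(−x₂x₃, x₁x₃, 0) be the torsion displacement field. Then at any fixed x₃, ∫_{{(x₁,x₂) : x₁²+x₂² ≤ R²}} [ μ_macro·‖sym Du(x)‖² + (λ_macro/2)·tr²(Du(x)) + (μL_c²/2)·( a₁·‖D(dev sym Du)(x)‖² + a₂·‖D(skew Du)(x)‖² + (2/9)·a₃·‖D(tr(Du)·𝟙)(x)‖² ) ] d(x₁,x₂) = (1/2)·[ μ_macro + 2μ(a₁ + 3a₂)·L_c²/R² ]·(πR⁴/2)·ϑ², i.e. W_tot = (1/2)·T_w·ϑ² with T_w = (μ_macro + 2μ(a₁+3a₂)L_c²/R²)·I_p and I_p = πR⁴/2. -/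

import Mathlib

open Matrix MeasureTheory Real Filter Asymptotics

noncomputable section

abbrev Mat3 := Matrix (Fin 3) (Fin 3) ℝ

/-- Partial derivative of a scalar field in the `j`-th coordinate direction. -/
def pd (j : Fin 3) (f : (Fin 3 → ℝ) → ℝ) (x : Fin 3 → ℝ) : ℝ :=
  fderiv ℝ f x (Pi.single j 1)

/-- Jacobian matrix (Du)ᵢⱼ = ∂uᵢ/∂xⱼ of a vector field. -/
def jac (u : (Fin 3 → ℝ) → Fin 3 → ℝ) (x : Fin 3 → ℝ) : Mat3 :=
  Matrix.of fun i j => pd j (fun y => u y i) x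

/-- Symmetric part of a matrix. -/
def symm3 (P : Mat3) : Mat3 := (1/2 : ℝ) • (P + Pᵀ)

/-- Skew-symmetric part of a matrix. -/
def skew3 (P : Mat3) : Mat3 := (1/2 : ℝ) • (P - Pᵀ)

/-- Deviatoric part of a matrix. -/
def dev3 (P : Mat3) : Mat3 := P - (Matrix.trace P / 3) • (1 : Mat3)

/-- Squared Frobenius norm. -/
def frob2 (P : Mat3) : ℝ := ∑ i, ∑ j, (P i j)^2

/-- Frobenius inner product. -/
def frobInner (P Q : Mat3) : ℝ := ∑ i, ∑ j, P i j * Q i j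

/-- Row-wise divergence of a matrix field. -/
def matDiv (σ : (Fin 3 → ℝ) → Mat3) (x : Fin 3 → ℝ) : Fin 3 → ℝ :=
  fun i => ∑ j, pd j (fun y => σ y i j) x

/-- Curl of a vector field. -/
def curl3 (v : (Fin 3 → ℝ) → Fin 3 → ℝ) (x : Fin 3 → ℝ) : Fin 3 → ℝ :=
  ![pd 1 (fun y => v y 2) x - pd 2 (fun y => v y 1) x,
    pd 2 (fun y => v y 0) x - pd 0 (fun y => v y 2) x,
    pd 0 (fun y => v y 1) x - pd 1 (fun y => v y 0) x]

/-- Row-wise Curl of a matrix field. -/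
def matCurl (P : (Fin 3 → ℝ) → Mat3) (x : Fin 3 → ℝ) : Mat3 :=
  Matrix.of fun i => curl3 (fun y => P y i) x

/-- The torsion displacement field u(x) = ϑ·(−x₂x₃, x₁x₃, 0). -/
def torsionU (ϑ : ℝ) (x : Fin 3 → ℝ) : Fin 3 → ℝ :=
  ![-(ϑ * x 1 * x 2), ϑ * x 0 * x 2, 0]

/-- Squared Frobenius norm of the (third-order) gradient of a matrix field. -/
def gradSq (M : (Fin 3 → ℝ) → Mat3) (x : Fin 3 → ℝ) : ℝ :=
  ∑ i, ∑ j, ∑ k, (pd k (fun y => M y i j) x) ^ 2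

/-! The Jacobian of the torsion field is trace free and linear in `x`, so every second-gradient term
is constant: `‖D(sym Du)‖² = ϑ²`, `‖D(skew Du)‖² = 3ϑ²` and `D(tr(Du)·𝟙) = 0`, while
`‖sym Du‖² = ϑ²(x₁² + x₂²)/2`. The energy density is therefore a function of `x₁² + x₂²`, which is
integrated over the disk in polar coordinates. -/

section PartialDerivative

variable {f g : (Fin 3 → ℝ) → ℝ} {x : Fin 3 → ℝ} (j : Fin 3)

@[simp] lemma pd_const (c : ℝ) : pd j (fun _ => c) x = 0 := by
  simp [pd]

@[simp] lemma pd_apply (k : Fin 3) : pd j (fun y => y k) x = (Pi.single j 1 : Fin 3 → ℝ) k := by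
  simp [pd, fderiv_apply]

@[simp] lemma pd_neg : pd j (fun y => -f y) x = -pd j f x := by
  simp [pd, fderiv_fun_neg]

lemma pd_const_mul (c : ℝ) (hf : DifferentiableAt ℝ f x) :
    pd j (fun y => c * f y) x = c * pd j f x := by
  simp [pd, fderiv_const_mul hf]

lemma pd_mul (hf : DifferentiableAt ℝ f x) (hg : DifferentiableAt ℝ g x) :
    pd j (fun y => f y * g y) x = f x * pd j g x + g x * pd j f x := by
  simp [pd, fderiv_fun_mul hf hg]

end PartialDerivative

lemma trace_symm3 (P : Mat3) : Matrix.trace (symm3 P) = Matrix.trace P := by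
  simp only [symm3, trace_smul, trace_add, trace_transpose, smul_eq_mul]
  ring

lemma dev3_of_trace_eq_zero {P : Mat3} (hP : Matrix.trace P = 0) : dev3 P = P := by
  simp [dev3, hP]

section Torsion

variable (ϑ : ℝ) (x : Fin 3 → ℝ)

lemma jac_torsionU :
    jac (torsionU ϑ) x = !![0, -(ϑ * x 2), -(ϑ * x 1); ϑ * x 2, 0, ϑ * x 0; 0, 0, 0] := by
  ext i j
  fin_cases i <;> fin_cases j <;>
    simp (disch := fun_prop) [jac, torsionU, pd_mul, Pi.single_apply] <;> ring

lemma trace_jac_torsionU : Matrix.trace (jac (torsionU ϑ) x) = 0 := by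
  simp [jac_torsionU, Matrix.trace_fin_three]

lemma symm3_jac_torsionU :
    symm3 (jac (torsionU ϑ) x) =
      !![0, 0, -(ϑ / 2 * x 1); 0, 0, ϑ / 2 * x 0; -(ϑ / 2 * x 1), ϑ / 2 * x 0, 0] := by
  ext i j
  fin_cases i <;> fin_cases j <;> simp [symm3, jac_torsionU] <;> ring

lemma skew3_jac_torsionU :
    skew3 (jac (torsionU ϑ) x) =
      !![0, -(ϑ * x 2), -(ϑ / 2 * x 1); ϑ * x 2, 0, ϑ / 2 * x 0;
        ϑ / 2 * x 1, -(ϑ / 2 * x 0), 0] := by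
  ext i j
  fin_cases i <;> fin_cases j <;> simp [skew3, jac_torsionU] <;> ring

lemma dev3_symm3_jac_torsionU :
    dev3 (symm3 (jac (torsionU ϑ) x)) = symm3 (jac (torsionU ϑ) x) :=
  dev3_of_trace_eq_zero ((trace_symm3 _).trans (trace_jac_torsionU ϑ x))

lemma frob2_symm3_jac_torsionU :
    frob2 (symm3 (jac (torsionU ϑ) x)) = ϑ ^ 2 / 2 * (x 0 ^ 2 + x 1 ^ 2) := by
  simp [frob2, symm3_jac_torsionU, Fin.sum_univ_three]
  ring

lemma gradSq_dev3_symm3_jac_torsionU :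
    gradSq (fun y => dev3 (symm3 (jac (torsionU ϑ) y))) x = ϑ ^ 2 := by
  simp only [dev3_symm3_jac_torsionU]
  simp (disch := fun_prop) [symm3_jac_torsionU, gradSq, Fin.sum_univ_three, pd_const_mul,
    Pi.single_apply]
  ring

lemma gradSq_skew3_jac_torsionU :
    gradSq (fun y => skew3 (jac (torsionU ϑ) y)) x = 3 * ϑ ^ 2 := by
  simp (disch := fun_prop) [skew3_jac_torsionU, gradSq, Fin.sum_univ_three, pd_const_mul,
    Pi.single_apply]
  ring

lemma gradSq_trace_jac_torsionU :
    gradSq (fun y => Matrix.trace (jac (torsionU ϑ) y) • (1 : Mat3)) x = 0 := by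
  simp [trace_jac_torsionU, gradSq]

end Torsion

section DiskIntegral

open Set

lemma polarCoord_symm_sq_add_sq (p : ℝ × ℝ) :
    (polarCoord.symm p).1 ^ 2 + (polarCoord.symm p).2 ^ 2 = p.1 ^ 2 := by
  simp only [polarCoord_symm_apply]
  linear_combination p.1 ^ 2 * sin_sq_add_cos_sq p.2

theorem integral_disk_radial (f : ℝ → ℝ) {R : ℝ} (hR : 0 ≤ R) :
    ∫ p in {p : ℝ × ℝ | p.1 ^ 2 + p.2 ^ 2 ≤ R ^ 2}, f (p.1 ^ 2 + p.2 ^ 2) =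
      2 * π * ∫ r in (0)..R, r * f (r ^ 2) := by
  have hdisk : MeasurableSet {p : ℝ × ℝ | p.1 ^ 2 + p.2 ^ 2 ≤ R ^ 2} :=
    measurableSet_le (by fun_prop) (by fun_prop)
  have hpolar : ∀ p ∈ polarCoord.target,
      p.1 • {p : ℝ × ℝ | p.1 ^ 2 + p.2 ^ 2 ≤ R ^ 2}.indicator (fun p => f (p.1 ^ 2 + p.2 ^ 2))
        (polarCoord.symm p) = (Ioc 0 R ×ˢ Ioo (-π) π).indicator (fun q => q.1 * f (q.1 ^ 2)) p := by
    rintro ⟨r, θ⟩ ⟨hr, hθ⟩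
    have hr : 0 < r := hr
    have hmem : r ^ 2 ≤ R ^ 2 ↔ r ≤ R := pow_le_pow_iff_left₀ hr.le hR two_ne_zero
    simp only [indicator, mem_ofPred_eq, polarCoord_symm_sq_add_sq, mem_prod, mem_Ioc, hmem, hr,
      hθ, true_and, and_true, smul_eq_mul]
    split_ifs <;> simp
  have hsub : Ioc 0 R ×ˢ Ioo (-π) π ⊆ polarCoord.target :=
    prod_mono Ioc_subset_Ioi_self subset_rfl
  rw [← integral_indicator hdisk, ← integral_comp_polarCoord_symm,
    setIntegral_congr_fun polarCoord.open_target.measurableSet hpolar,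
    setIntegral_indicator (measurableSet_Ioc.prod measurableSet_Ioo), inter_eq_right.mpr hsub,
    Measure.volume_eq_prod]
  have hprod := setIntegral_prod_mul (μ := volume) (ν := volume) (fun r => r * f (r ^ 2))
    (fun _ => (1 : ℝ)) (Ioc 0 R) (Ioo (-π) π)
  simp only [mul_one, setIntegral_const, smul_eq_mul, Measure.real, volume_Ioo] at hprod
  rw [hprod, intervalIntegral.integral_of_le hR, ENNReal.toReal_ofReal (by linarith [pi_pos])]
  ring

end DiskIntegral

lemma integral_mul_affine_sq (a b R : ℝ) :
    ∫ r in (0)..R, r * (a * r ^ 2 + b) = a * R ^ 4 / 4 + b * R ^ 2 / 2 := by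
  have h4 : ∀ r : ℝ, HasDerivAt (fun r : ℝ => r ^ 4) (4 * r ^ 3) r := fun r => by
    simpa using hasDerivAt_pow 4 r
  have h2 : ∀ r : ℝ, HasDerivAt (fun r : ℝ => r ^ 2) (2 * r) r := fun r => by
    simpa using hasDerivAt_pow 2 r
  rw [intervalIntegral.integral_eq_sub_of_hasDerivAt
    (f := fun r => a * r ^ 4 / 4 + b * r ^ 2 / 2) (fun r _ =>
      (((h4 r).const_mul a).div_const 4).fun_add (((h2 r).const_mul b).div_const 2)
        |>.congr_deriv (by ring))
    ((by fun_prop : Continuous fun r : ℝ => r * (a * r ^ 2 + b)).intervalIntegrable _ _)]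
  ring

/-- the second gradient torsion energy per unit length equals
(1/2)·(μ_macro + 2μ(a₁+3a₂)L_c²/R²)·(πR⁴/2)·ϑ². -/
theorem second_gradient_torsion_energy
    (μmacro lam μ Lc a₁ a₂ a₃ ϑ R : ℝ) (hR : 0 < R) (z : ℝ) :
    ∫ p in {p : ℝ × ℝ | p.1 ^ 2 + p.2 ^ 2 ≤ R ^ 2},
        (μmacro * frob2 (symm3 (jac (torsionU ϑ) ![p.1, p.2, z]))
          + lam / 2 * (Matrix.trace (jac (torsionU ϑ) ![p.1, p.2, z])) ^ 2
          + μ * Lc ^ 2 / 2 *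
            (a₁ * gradSq (fun y => dev3 (symm3 (jac (torsionU ϑ) y))) ![p.1, p.2, z]
              + a₂ * gradSq (fun y => skew3 (jac (torsionU ϑ) y)) ![p.1, p.2, z]
              + 2 / 9 * a₃ *
                gradSq (fun y => Matrix.trace (jac (torsionU ϑ) y) • (1 : Mat3))
                  ![p.1, p.2, z]))
      = 1 / 2 * (μmacro + 2 * μ * (a₁ + 3 * a₂) * Lc ^ 2 / R ^ 2) * (π * R ^ 4 / 2) * ϑ ^ 2 := by
  set c₁ := μmacro * ϑ ^ 2 / 2
  set c₂ := μ * Lc ^ 2 / 2 * (a₁ + 3 * a₂) * ϑ ^ 2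
  calc _ = ∫ p in {p : ℝ × ℝ | p.1 ^ 2 + p.2 ^ 2 ≤ R ^ 2},
          c₁ * (p.1 ^ 2 + p.2 ^ 2) + c₂ := by
        congr 1 with p
        rw [frob2_symm3_jac_torsionU, gradSq_dev3_symm3_jac_torsionU, gradSq_skew3_jac_torsionU,
          gradSq_trace_jac_torsionU, trace_jac_torsionU]
        simp only [Matrix.cons_val_zero, Matrix.cons_val_one]
        ring
    _ = 2 * π * (c₁ * R ^ 4 / 4 + c₂ * R ^ 2 / 2) := by
        simpa only [integral_mul_affine_sq] using
          integral_disk_radial (fun t => c₁ * t + c₂) hR.le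
    _ = _ := by
        field_simp
        ring
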